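/- arXiv:math/0310071 — 3 statements merged into one kernel-verified Lean document; each statement's English description precedes it below -/
import Mathlib

section
/- If f : [0,∞) → ℝ is smooth with f'(t) > 0 for all t > 0, f(0) < s < sup_{t>0} f(t) < ∞, and sup_{t>0} t^4|f'''(t)| < ∞, then there exists f_∞ := sup_{t>0} f(t) > s such that sup_{t>0} [ t|f(t) - f_∞| + t^2 f'(t) + t^3 |f''(t)| + t^4 |f'''(t)| ] < +∞. -/
open Set Filter MeasureTheory intervalIntegral

/-- FTC-based decay bound: if `|g'| ≤ C/u^(j+1)` on `(0,∞)` then increments of `g`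
are bounded by `C/(j t^j)`. -/
lemma stmt4_ftc_bound (g g' : ℝ → ℝ)
    (hg : ∀ u : ℝ, 0 < u → HasDerivAt g (g' u) u)
    (hc : ContinuousOn g' (Set.Ioi 0)) (C : ℝ) (j : ℕ) (hj : 1 ≤ j)
    (hb : ∀ u : ℝ, 0 < u → |g' u| ≤ C / u ^ (j + 1))
    (t x : ℝ) (ht : 0 < t) (htx : t ≤ x) :
    |g x - g t| ≤ C / (j * t ^ j) := by
  have hx : 0 < x := lt_of_lt_of_le ht htx
  have hjR : (0:ℝ) < (j:ℝ) := by exact_mod_cast Nat.lt_of_lt_of_le Nat.zero_lt_one hj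
  have hC : 0 ≤ C := by
    have h1 := (abs_nonneg (g' t)).trans (hb t ht)
    have h2 : (0:ℝ) < t ^ (j+1) := pow_pos ht _
    nlinarith [mul_nonneg h1 h2.le, div_mul_cancel₀ C (ne_of_gt h2)]
  have hsub : Set.uIcc t x ⊆ Set.Ioi 0 := by
    rw [Set.uIcc_of_le htx]
    intro u hu
    exact lt_of_lt_of_le ht hu.1
  -- FTC for g
  have hint : IntervalIntegrable g' MeasureTheory.volume t x :=
    (hc.mono hsub).intervalIntegrable
  have hftc : ∫ u in t..x, g' u = g x - g t :=
    intervalIntegral.integral_eq_sub_of_hasDerivAt (fun u hu => hg u (hsub hu)) hint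
  -- explicit antiderivative of the bound
  set G : ℝ → ℝ := fun u => -(C / j) * u ^ (-(j:ℤ)) with hGdef
  have hGd : ∀ u : ℝ, 0 < u → HasDerivAt G (C / u ^ (j+1)) u := by
    intro u hu
    have h2 := (hasDerivAt_zpow (-(j:ℤ)) u (Or.inl hu.ne')).const_mul (-(C / j))
    refine h2.congr_deriv ?_
    have he : -(j:ℤ) - 1 = -(((j:ℕ) + 1 : ℕ) : ℤ) := by push_cast; ring
    rw [he, zpow_neg, zpow_natCast]
    have hp : (u : ℝ) ^ (j+1) ≠ 0 := ne_of_gt (pow_pos hu _)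
    field_simp
    push_cast
    ring
  have hcb : ContinuousOn (fun u : ℝ => C / u ^ (j+1)) (Set.uIcc t x) := by
    apply ContinuousOn.div continuousOn_const ((continuous_pow (j+1)).continuousOn)
    intro u hu
    exact ne_of_gt (pow_pos (hsub hu) _)
  have hintb : IntervalIntegrable (fun u : ℝ => C / u ^ (j+1)) MeasureTheory.volume t x :=
    hcb.intervalIntegrable
  have hftcb : ∫ u in t..x, C / u ^ (j+1) = G x - G t :=
    intervalIntegral.integral_eq_sub_of_hasDerivAt (fun u hu => hGd u (hsub hu)) hintb
  -- compare
  have hae : ∀ᵐ u ∂(MeasureTheory.volume.restrict (Set.uIoc t x)), ‖g' u‖ ≤ C / u ^ (j+1) := by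
    refine (MeasureTheory.ae_restrict_mem measurableSet_uIoc).mono (fun u hu => ?_)
    rw [Set.uIoc_of_le htx] at hu
    rw [Real.norm_eq_abs]
    exact hb u (lt_trans ht hu.1)
  have hnorm := intervalIntegral.norm_integral_le_abs_of_norm_le hae hintb
  rw [hftc, hftcb] at hnorm
  -- evaluate G x - G t
  have hGval : G x - G t = C / (j * t ^ j) - C / (j * x ^ j) := by
    simp only [hGdef, zpow_neg, zpow_natCast]
    have h1 : (t : ℝ) ^ j ≠ 0 := ne_of_gt (pow_pos ht _)
    have h2 : (x : ℝ) ^ j ≠ 0 := ne_of_gt (pow_pos hx _)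
    field_simp
    ring
  have hnn : 0 ≤ C / (j * t ^ j) - C / (j * x ^ j) := by
    have h1 : (0:ℝ) < j * t ^ j := mul_pos hjR (pow_pos ht _)
    have h2 : (0:ℝ) < j * x ^ j := mul_pos hjR (pow_pos hx _)
    have h3 : j * t ^ j ≤ j * x ^ j :=
      mul_le_mul_of_nonneg_left (pow_le_pow_left₀ ht.le htx _) hjR.le
    linarith [div_le_div_of_nonneg_left hC h1 h3]
  have habs : |G x - G t| = C / (j * t ^ j) - C / (j * x ^ j) := by
    rw [hGval, abs_of_nonneg hnn]
  rw [Real.norm_eq_abs] at hnorm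
  have hlast : C / (j * x ^ j) ≥ 0 := by positivity
  calc |g x - g t| ≤ |G x - G t| := hnorm
    _ = C / (j * t ^ j) - C / (j * x ^ j) := habs
    _ ≤ C / (j * t ^ j) := by linarith

/-- From uniform decay of increments extract a limit at infinity with the same
pointwise decay rate. -/
lemma stmt4_decay_limit (g : ℝ → ℝ) (C : ℝ) (j : ℕ) (hj : 1 ≤ j) (hC : 0 ≤ C)
    (key : ∀ t x : ℝ, 0 < t → t ≤ x → |g x - g t| ≤ C / (j * t ^ j)) :
    ∃ L : ℝ, Filter.Tendsto g Filter.atTop (nhds L) ∧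
      ∀ t : ℝ, 0 < t → |g t - L| ≤ C / (j * t ^ j) := by
  have hjR : (0:ℝ) < (j:ℝ) := by exact_mod_cast Nat.lt_of_lt_of_le Nat.zero_lt_one hj
  -- the decay rate tends to zero
  have hrate : Filter.Tendsto (fun t : ℝ => C / (j * t ^ j)) Filter.atTop (nhds 0) := by
    apply Filter.Tendsto.div_atTop tendsto_const_nhds
    apply Filter.Tendsto.const_mul_atTop hjR
    exact tendsto_pow_atTop (by omega) |>.comp Filter.tendsto_id |>.congr (fun x => rfl)
  -- Cauchy sequence g (n+1)
  have hcs : CauchySeq (fun n : ℕ => g ((n:ℝ) + 1)) := by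
    apply cauchySeq_of_le_tendsto_0 (fun N : ℕ => 2 * C / (j * ((N:ℝ) + 1) ^ j))
    · intro n m N hn hm
      have hN : (0:ℝ) < (N:ℝ) + 1 := by positivity
      have h1 : ((N:ℝ) + 1) ≤ (n:ℝ) + 1 := by exact_mod_cast Nat.add_le_add_right hn 1
      have h2 : ((N:ℝ) + 1) ≤ (m:ℝ) + 1 := by exact_mod_cast Nat.add_le_add_right hm 1
      have b1 := key ((N:ℝ)+1) ((n:ℝ)+1) hN h1
      have b2 := key ((N:ℝ)+1) ((m:ℝ)+1) hN h2
      rw [Real.dist_eq]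
      have : |g ((n:ℝ)+1) - g ((m:ℝ)+1)| ≤ |g ((n:ℝ)+1) - g ((N:ℝ)+1)| + |g ((m:ℝ)+1) - g ((N:ℝ)+1)| := by
        rw [abs_sub_comm (g ((m:ℝ)+1))]
        exact abs_sub_le _ _ _ |>.trans (by rw [abs_sub_comm (g ((N:ℝ)+1))])
      calc |g ((n:ℝ)+1) - g ((m:ℝ)+1)| ≤ _ + _ := this
        _ ≤ C / (j * ((N:ℝ)+1) ^ j) + C / (j * ((N:ℝ)+1) ^ j) := add_le_add b1 b2
        _ = 2 * C / (j * ((N:ℝ)+1) ^ j) := by ring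
    · have : Filter.Tendsto (fun N : ℕ => (N:ℝ) + 1) Filter.atTop Filter.atTop :=
        Filter.tendsto_atTop_add_const_right _ 1 tendsto_natCast_atTop_atTop
      have h2 := (hrate.comp this)
      have h3 : Filter.Tendsto (fun N : ℕ => 2 * (C / (j * ((N:ℝ)+1) ^ j))) Filter.atTop (nhds (2 * 0)) :=
        h2.const_mul 2
      simpa [mul_div_assoc] using h3
  obtain ⟨L, hL⟩ := cauchySeq_tendsto_of_complete hcs
  have hbound : ∀ t : ℝ, 0 < t → |g t - L| ≤ C / (j * t ^ j) := by
    intro t ht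
    have hseq : Filter.Tendsto (fun n : ℕ => |g t - g ((n:ℝ)+1)|) Filter.atTop (nhds |g t - L|) :=
      ((tendsto_const_nhds.sub hL).abs)
    refine le_of_tendsto hseq ?_
    filter_upwards [Filter.eventually_ge_atTop (Nat.ceil t)] with n hn
    have htn : t ≤ (n:ℝ) + 1 := le_trans (Nat.le_ceil t) (by exact_mod_cast le_trans hn (Nat.le_succ n))
    rw [abs_sub_comm]
    exact key t ((n:ℝ)+1) ht htn
  refine ⟨L, ?_, hbound⟩
  have hzero : Filter.Tendsto (fun t : ℝ => g t - L) Filter.atTop (nhds 0) := by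
    apply squeeze_zero_norm' _ hrate
    filter_upwards [Filter.eventually_gt_atTop (0:ℝ)] with t ht
    rw [Real.norm_eq_abs]
    exact hbound t ht
  have := hzero.add_const L
  simpa using this

/-- Linear lower growth from a lower bound on the derivative. -/
lemma stmt4_growth (g g' : ℝ → ℝ) (hg : ∀ u : ℝ, 0 < u → HasDerivAt g (g' u) u)
    (c t₀ : ℝ) (ht₀ : 0 < t₀) (hlb : ∀ u : ℝ, t₀ ≤ u → c ≤ g' u)
    (x : ℝ) (hx : t₀ ≤ x) : g t₀ + c * (x - t₀) ≤ g x := by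
  set h : ℝ → ℝ := fun u => g u - c * u with hh
  have hd : ∀ u : ℝ, t₀ ≤ u → HasDerivAt h (g' u - c) u := by
    intro u hu
    have := (hg u (lt_of_lt_of_le ht₀ hu)).sub ((hasDerivAt_id u).const_mul c)
    rw [mul_one] at this
    exact this
  have hmono : MonotoneOn h (Set.Ici t₀) := by
    apply monotoneOn_of_deriv_nonneg (convex_Ici t₀)
    · intro u hu
      exact (hd u hu).continuousAt.continuousWithinAt
    · intro u hu
      rw [interior_Ici] at hu
      exact (hd u hu.le).differentiableAt.differentiableWithinAt
    · intro u hu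
      rw [interior_Ici] at hu
      rw [(hd u hu.le).deriv]
      have := hlb u hu.le
      linarith
  have := hmono (Set.self_mem_Ici) (by exact hx : x ∈ Set.Ici t₀) hx
  simp only [hh] at this
  linarith
/-- If `f : [0,∞) → ℝ` is smooth with `f' > 0` on `(0,∞)`,
`f(0) < s < sup_{t>0} f(t) < ∞`, and `sup_{t>0} t⁴|f'''(t)| < ∞`, then with
`f_∞ := sup_{t>0} f(t)` one has `f_∞ > s` and
`sup_{t>0} [ t|f(t)-f_∞| + t² f'(t) + t³|f''(t)| + t⁴|f'''(t)| ] < +∞`. -/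
theorem stmt4 (f : ℝ → ℝ) (s : ℝ)
    (hsmooth : ContDiffOn ℝ (⊤ : ℕ∞) f (Set.Ici 0))
    (hmono : ∀ t : ℝ, 0 < t → 0 < deriv f t)
    (h0 : f 0 < s)
    (hs : s < sSup (f '' Set.Ioi 0))
    (hbdd : BddAbove (f '' Set.Ioi 0))
    (h3 : BddAbove ((fun t : ℝ => t ^ 4 * |iteratedDeriv 3 f t|) '' Set.Ioi 0)) :
    s < sSup (f '' Set.Ioi 0) ∧
    BddAbove ((fun t : ℝ =>
        t * |f t - sSup (f '' Set.Ioi 0)| + t ^ 2 * deriv f t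
          + t ^ 3 * |iteratedDeriv 2 f t| + t ^ 4 * |iteratedDeriv 3 f t|) '' Set.Ioi 0) := by
  have hopen : IsOpen (Set.Ioi (0:ℝ)) := isOpen_Ioi
  have hfs : ContDiffOn ℝ (⊤ : ℕ∞) f (Set.Ioi 0) := hsmooth.mono (fun u hu => Set.mem_Ici.mpr (le_of_lt hu))
  -- On the open set `(0,∞)`, `iteratedDerivWithin` agrees with `iteratedDeriv`.
  have heq : ∀ n : ℕ, Set.EqOn (iteratedDerivWithin n f (Set.Ioi 0)) (iteratedDeriv n f)
      (Set.Ioi 0) := by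
    intro n u hu
    rw [iteratedDerivWithin_eq_iteratedFDerivWithin, iteratedDeriv_eq_iteratedFDeriv,
        iteratedFDerivWithin_of_isOpen n hopen hu]
  have hD : ∀ (m : ℕ) (u : ℝ), 0 < u →
      HasDerivAt (iteratedDeriv m f) (iteratedDeriv (m+1) f u) u := by
    intro m u hu
    have h1 : DifferentiableWithinAt ℝ (iteratedDerivWithin m f (Set.Ioi 0)) (Set.Ioi 0) u :=
      (hfs.differentiableOn_iteratedDerivWithin (by exact_mod_cast ENat.coe_lt_top m)
        (uniqueDiffOn_Ioi 0)) u hu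
    have h2 : DifferentiableAt ℝ (iteratedDerivWithin m f (Set.Ioi 0)) u :=
      h1.differentiableAt (hopen.mem_nhds hu)
    have h3 : iteratedDerivWithin m f (Set.Ioi 0) =ᶠ[nhds u] iteratedDeriv m f :=
      Filter.eventuallyEq_of_mem (hopen.mem_nhds hu) (heq m)
    have h4 : DifferentiableAt ℝ (iteratedDeriv m f) u := h2.congr_of_eventuallyEq h3.symm
    have h5 : deriv (iteratedDeriv m f) u = iteratedDeriv (m+1) f u := by
      rw [← h3.deriv_eq, ← derivWithin_of_isOpen hopen hu,
          ← iteratedDerivWithin_succ]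
      exact heq (m+1) hu
    have h6 := h4.hasDerivAt
    rwa [h5] at h6
  have hd0 : ∀ u : ℝ, 0 < u → HasDerivAt f (deriv f u) u := by
    intro u hu
    have := hD 0 u hu
    rwa [iteratedDeriv_zero, iteratedDeriv_one] at this
  have hd1 : ∀ u : ℝ, 0 < u → HasDerivAt (deriv f) (iteratedDeriv 2 f u) u := by
    intro u hu
    have := hD 1 u hu
    rwa [iteratedDeriv_one] at this
  have hd2 : ∀ u : ℝ, 0 < u → HasDerivAt (iteratedDeriv 2 f) (iteratedDeriv 3 f u) u :=
    fun u hu => hD 2 u hu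
  have hc1 : ContinuousOn (deriv f) (Set.Ioi 0) :=
    fun u hu => (hd1 u hu).differentiableAt.continuousAt.continuousWithinAt
  have hc2 : ContinuousOn (iteratedDeriv 2 f) (Set.Ioi 0) :=
    fun u hu => (hd2 u hu).differentiableAt.continuousAt.continuousWithinAt
  have hc3 : ContinuousOn (iteratedDeriv 3 f) (Set.Ioi 0) :=
    fun u hu => (hD 3 u hu).differentiableAt.continuousAt.continuousWithinAt
  -- the bound on the third derivative
  set M := sSup ((fun t : ℝ => t ^ 4 * |iteratedDeriv 3 f t|) '' Set.Ioi 0) with hMdef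
  have hM : ∀ t : ℝ, 0 < t → t ^ 4 * |iteratedDeriv 3 f t| ≤ M :=
    fun t ht => le_csSup h3 ⟨t, ht, rfl⟩
  have hM0 : 0 ≤ M := le_trans (by positivity) (hM 1 one_pos)
  have hb3 : ∀ u : ℝ, 0 < u → |iteratedDeriv 3 f u| ≤ M / u ^ (3 + 1) := by
    intro u hu
    have h4 : u ^ (3+1) = u ^ 4 := by norm_num
    rw [le_div_iff₀ (by rw [h4]; positivity), h4, mul_comm]
    exact hM u hu
  have hBf : ∀ t : ℝ, 0 < t → f t ≤ sSup (f '' Set.Ioi 0) :=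
    fun t ht => le_csSup hbdd ⟨t, ht, rfl⟩
  obtain ⟨B, hBmem⟩ := hbdd
  have hfB : ∀ t : ℝ, 0 < t → f t ≤ B := fun t ht => hBmem ⟨t, ht, rfl⟩
  -- second derivative decay
  have key2 : ∀ t x : ℝ, 0 < t → t ≤ x →
      |iteratedDeriv 2 f x - iteratedDeriv 2 f t| ≤ M / (3 * t ^ 3) := by
    intro t x ht htx
    have := stmt4_ftc_bound (iteratedDeriv 2 f) (iteratedDeriv 3 f) hd2 hc3 M 3
      (by norm_num) hb3 t x ht htx
    push_cast at this
    exact this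
  obtain ⟨L₂, hL₂T, hL₂'⟩ := stmt4_decay_limit (iteratedDeriv 2 f) M 3 (by norm_num) hM0
    (by intro t x ht htx; push_cast; exact key2 t x ht htx)
  have hL₂ : ∀ t : ℝ, 0 < t → |iteratedDeriv 2 f t - L₂| ≤ M / (3 * t ^ 3) := by
    intro t ht
    have := hL₂' t ht
    push_cast at this
    exact this
  have hL₂0 : L₂ = 0 := by
    rcases lt_trichotomy L₂ 0 with hneg | h0' | hpos
    · exfalso
      have hL2ne : L₂ ≠ 0 := ne_of_lt hneg
      set u₀ := max 1 (2 * M / (3 * (-L₂))) with hu₀def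
      have hu₀1 : (1:ℝ) ≤ u₀ := le_max_left _ _
      have hu₀pos : (0:ℝ) < u₀ := lt_of_lt_of_le one_pos hu₀1
      have hub : ∀ u : ℝ, u₀ ≤ u → iteratedDeriv 2 f u ≤ L₂ / 2 := by
        intro u hu
        have hu1 : (1:ℝ) ≤ u := hu₀1.trans hu
        have hupos : (0:ℝ) < u := lt_of_lt_of_le one_pos hu1
        have hb := (abs_le.mp (hL₂ u hupos)).2
        have h2 : u ≤ u ^ 3 := le_self_pow₀ hu1 (by norm_num)
        have h3 : 2 * M / (3 * (-L₂)) ≤ u := (le_max_right _ _).trans hu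
        have h5 : 2 * M ≤ u * (3 * (-L₂)) :=
          (div_le_iff₀ (by linarith : (0:ℝ) < 3 * (-L₂))).mp h3
        have h4 : M / (3 * u ^ 3) ≤ -L₂ / 2 := by
          rw [div_le_div_iff₀ (by positivity) (by norm_num)]
          nlinarith
        linarith
      have hgr := stmt4_growth (fun u => -(deriv f u)) (fun u => -(iteratedDeriv 2 f u))
        (fun u hu => (hd1 u hu).neg) (-L₂ / 2) u₀ hu₀pos
        (fun u hu => by have := hub u hu; linarith)
      set x := u₀ + 2 / (-L₂) * (deriv f u₀ + 1) with hxdef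
      have hd₀pos : 0 < deriv f u₀ := hmono u₀ hu₀pos
      have hxu : u₀ ≤ x := by
        have hq : (0:ℝ) < 2 / (-L₂) := div_pos two_pos (by linarith)
        have hq2 : 0 < 2 / (-L₂) * (deriv f u₀ + 1) := mul_pos hq (by linarith)
        rw [hxdef]
        linarith
      have hgx := hgr x hxu
      have hcomp : -L₂ / 2 * (x - u₀) = deriv f u₀ + 1 := by
        have hxx : x - u₀ = 2 / (-L₂) * (deriv f u₀ + 1) := by rw [hxdef]; ring
        rw [hxx]
        field_simp
      have hxpos : 0 < x := lt_of_lt_of_le hu₀pos hxu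
      have := hmono x hxpos
      linarith
    · exact h0'
    · exfalso
      set u₀ := max 1 (2 * M / (3 * L₂)) with hu₀def
      have hu₀1 : (1:ℝ) ≤ u₀ := le_max_left _ _
      have hu₀pos : (0:ℝ) < u₀ := lt_of_lt_of_le one_pos hu₀1
      have hlb : ∀ u : ℝ, u₀ ≤ u → L₂ / 2 ≤ iteratedDeriv 2 f u := by
        intro u hu
        have hu1 : (1:ℝ) ≤ u := hu₀1.trans hu
        have hupos : (0:ℝ) < u := lt_of_lt_of_le one_pos hu1
        have hb := (abs_le.mp (hL₂ u hupos)).1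
        have h2 : u ≤ u ^ 3 := le_self_pow₀ hu1 (by norm_num)
        have h3 : 2 * M / (3 * L₂) ≤ u := (le_max_right _ _).trans hu
        have h5 : 2 * M ≤ u * (3 * L₂) :=
          (div_le_iff₀ (by positivity : (0:ℝ) < 3 * L₂)).mp h3
        have h4 : M / (3 * u ^ 3) ≤ L₂ / 2 := by
          rw [div_le_div_iff₀ (by positivity) (by norm_num)]
          nlinarith
        linarith
      have hgr := stmt4_growth (deriv f) (iteratedDeriv 2 f) hd1 (L₂ / 2) u₀ hu₀pos hlb
      set x₁ := u₀ + 2 / L₂ * (1 + |deriv f u₀|) with hx₁def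
      have hx₁u : u₀ ≤ x₁ := by
        have hq : (0:ℝ) ≤ 2 / L₂ * (1 + |deriv f u₀|) :=
          mul_nonneg (div_nonneg (by norm_num) hpos.le) (by positivity)
        rw [hx₁def]
        linarith
      have hx₁pos : 0 < x₁ := lt_of_lt_of_le hu₀pos hx₁u
      have h1le : ∀ x : ℝ, x₁ ≤ x → 1 ≤ deriv f x := by
        intro x hx
        have hxu₀ : u₀ ≤ x := hx₁u.trans hx
        have hgrx := hgr x hxu₀
        have hmul : L₂ / 2 * (x₁ - u₀) ≤ L₂ / 2 * (x - u₀) :=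
          mul_le_mul_of_nonneg_left (by linarith) (by positivity)
        have hc : L₂ / 2 * (x₁ - u₀) = 1 + |deriv f u₀| := by
          have hxx : x₁ - u₀ = 2 / L₂ * (1 + |deriv f u₀|) := by rw [hx₁def]; ring
          rw [hxx]
          field_simp
        have habs := neg_abs_le (deriv f u₀)
        linarith
      have hgr2 := stmt4_growth f (deriv f) hd0 1 x₁ hx₁pos h1le
      set x₂ := x₁ + |B - f x₁| + 1 with hx₂def
      have hx₂ : x₁ ≤ x₂ := by
        rw [hx₂def]
        have := abs_nonneg (B - f x₁)
        linarith
      have hfx₂ := hgr2 x₂ hx₂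
      have hx₂pos : 0 < x₂ := lt_of_lt_of_le hx₁pos hx₂
      have hle := hfB x₂ hx₂pos
      have habs := le_abs_self (B - f x₁)
      have hxx : x₂ - x₁ = |B - f x₁| + 1 := by rw [hx₂def]; ring
      rw [hxx] at hfx₂
      linarith
  -- first derivative decay
  have hb2 : ∀ u : ℝ, 0 < u → |iteratedDeriv 2 f u| ≤ M / 3 / u ^ (2 + 1) := by
    intro u hu
    have := hL₂ u hu
    rw [hL₂0, sub_zero] at this
    calc |iteratedDeriv 2 f u| ≤ M / (3 * u ^ 3) := this
      _ = M / 3 / u ^ (2+1) := by rw [div_div]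
  have key1 := stmt4_ftc_bound (deriv f) (iteratedDeriv 2 f) hd1 hc2 (M / 3) 2
    (by norm_num) hb2
  obtain ⟨L₁, hL₁T, hL₁'⟩ := stmt4_decay_limit (deriv f) (M / 3) 2 (by norm_num)
    (by positivity) key1
  have hL₁ : ∀ t : ℝ, 0 < t → |deriv f t - L₁| ≤ M / (6 * t ^ 2) := by
    intro t ht
    have := hL₁' t ht
    push_cast at this
    calc |deriv f t - L₁| ≤ M / 3 / (2 * t ^ 2) := this
      _ = M / (6 * t ^ 2) := by rw [div_div]; ring_nf
  have hL₁0 : L₁ = 0 := by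
    rcases lt_trichotomy L₁ 0 with hneg | h0' | hpos
    · exfalso
      set t := max 1 (M / (6 * (-L₁))) with htdef
      have ht1 : (1:ℝ) ≤ t := le_max_left _ _
      have htpos : (0:ℝ) < t := lt_of_lt_of_le one_pos ht1
      have hb := (abs_le.mp (hL₁ t htpos)).2
      have h2 : t ≤ t ^ 2 := le_self_pow₀ ht1 (by norm_num)
      have h3 : M / (6 * (-L₁)) ≤ t := (le_max_right _ _).trans (le_refl t)
      have h5 : M ≤ t * (6 * (-L₁)) :=
        (div_le_iff₀ (by linarith : (0:ℝ) < 6 * (-L₁))).mp h3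
      have h4 : M / (6 * t ^ 2) ≤ -L₁ := by
        rw [div_le_iff₀ (by positivity)]
        nlinarith
      have := hmono t htpos
      linarith
    · exact h0'
    · exfalso
      set u₀ := max 1 (M / (3 * L₁)) with hu₀def
      have hu₀1 : (1:ℝ) ≤ u₀ := le_max_left _ _
      have hu₀pos : (0:ℝ) < u₀ := lt_of_lt_of_le one_pos hu₀1
      have hlb : ∀ u : ℝ, u₀ ≤ u → L₁ / 2 ≤ deriv f u := by
        intro u hu
        have hu1 : (1:ℝ) ≤ u := hu₀1.trans hu
        have hupos : (0:ℝ) < u := lt_of_lt_of_le one_pos hu1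
        have hb := (abs_le.mp (hL₁ u hupos)).1
        have h2 : u ≤ u ^ 2 := le_self_pow₀ hu1 (by norm_num)
        have h3 : M / (3 * L₁) ≤ u := (le_max_right _ _).trans hu
        have h5 : M ≤ u * (3 * L₁) :=
          (div_le_iff₀ (by positivity : (0:ℝ) < 3 * L₁)).mp h3
        have h4 : M / (6 * u ^ 2) ≤ L₁ / 2 := by
          rw [div_le_div_iff₀ (by positivity) (by norm_num)]
          nlinarith
        linarith
      have hgr := stmt4_growth f (deriv f) hd0 (L₁ / 2) u₀ hu₀pos hlb
      set x := u₀ + 2 / L₁ * (|B - f u₀| + 1) with hxdef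
      have hxu : u₀ ≤ x := by
        have hq : (0:ℝ) ≤ 2 / L₁ * (|B - f u₀| + 1) :=
          mul_nonneg (div_nonneg (by norm_num) hpos.le) (by positivity)
        rw [hxdef]
        linarith
      have hxpos : 0 < x := lt_of_lt_of_le hu₀pos hxu
      have hgx := hgr x hxu
      have hc : L₁ / 2 * (x - u₀) = |B - f u₀| + 1 := by
        have hxx : x - u₀ = 2 / L₁ * (|B - f u₀| + 1) := by rw [hxdef]; ring
        rw [hxx]
        field_simp
      have habs := le_abs_self (B - f u₀)
      have hle := hfB x hxpos
      linarith
  -- decay of f itself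
  have hb1 : ∀ u : ℝ, 0 < u → |deriv f u| ≤ M / 6 / u ^ (1 + 1) := by
    intro u hu
    have := hL₁ u hu
    rw [hL₁0, sub_zero] at this
    calc |deriv f u| ≤ M / (6 * u ^ 2) := this
      _ = M / 6 / u ^ (1+1) := by rw [div_div]
  have key0 := stmt4_ftc_bound f (deriv f) hd0 hc1 (M / 6) 1 (by norm_num) hb1
  obtain ⟨L₀, hL₀T, hL₀'⟩ := stmt4_decay_limit f (M / 6) 1 (by norm_num) (by positivity) key0
  have hL₀ : ∀ t : ℝ, 0 < t → |f t - L₀| ≤ M / (6 * t) := by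
    intro t ht
    have := hL₀' t ht
    push_cast at this
    calc |f t - L₀| ≤ M / 6 / (1 * t ^ 1) := this
      _ = M / (6 * t) := by rw [div_div]; ring_nf
  -- monotonicity of f on (0,∞)
  have hmonof : ∀ t x : ℝ, 0 < t → t ≤ x → f t ≤ f x := by
    intro t x ht htx
    have := stmt4_growth f (deriv f) hd0 0 t ht
      (fun u hu => (hmono u (lt_of_lt_of_le ht hu)).le) x htx
    simpa using this
  -- the sup is the limit
  have hsup : sSup (f '' Set.Ioi 0) = L₀ := by
    apply le_antisymm
    · refine csSup_le ⟨f 1, ⟨1, Set.mem_Ioi.mpr one_pos, rfl⟩⟩ ?_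
      rintro y ⟨t, ht, rfl⟩
      refine ge_of_tendsto hL₀T ?_
      filter_upwards [Filter.eventually_ge_atTop t] with x hx
      exact hmonof t x ht hx
    · refine le_of_tendsto hL₀T ?_
      filter_upwards [Filter.eventually_gt_atTop (0:ℝ)] with x hx
      exact hBf x hx
  refine ⟨hs, ⟨M/6 + M/6 + M/3 + M, ?_⟩⟩
  rw [mem_upperBounds]
  rintro y ⟨t, ht, rfl⟩
  have htpos : (0:ℝ) < t := ht
  have b0 : t * |f t - sSup (f '' Set.Ioi 0)| ≤ M / 6 := by
    rw [hsup]
    have h1 := hL₀ t htpos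
    have h2 : t * |f t - L₀| ≤ t * (M / (6 * t)) :=
      mul_le_mul_of_nonneg_left h1 htpos.le
    have h3 : t * (M / (6 * t)) = M / 6 := by field_simp
    linarith
  have b1 : t ^ 2 * deriv f t ≤ M / 6 := by
    have h1 := hL₁ t htpos
    rw [hL₁0, sub_zero] at h1
    have h1' : deriv f t ≤ M / (6 * t ^ 2) := (abs_le.mp h1).2
    have h2 : t ^ 2 * deriv f t ≤ t ^ 2 * (M / (6 * t ^ 2)) :=
      mul_le_mul_of_nonneg_left h1' (by positivity)
    have h3 : t ^ 2 * (M / (6 * t ^ 2)) = M / 6 := by field_simp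
    linarith
  have b2 : t ^ 3 * |iteratedDeriv 2 f t| ≤ M / 3 := by
    have h1 := hL₂ t htpos
    rw [hL₂0, sub_zero] at h1
    have h2 : t ^ 3 * |iteratedDeriv 2 f t| ≤ t ^ 3 * (M / (3 * t ^ 3)) :=
      mul_le_mul_of_nonneg_left h1 (by positivity)
    have h3 : t ^ 3 * (M / (3 * t ^ 3)) = M / 3 := by field_simp
    linarith
  have b3 : t ^ 4 * |iteratedDeriv 3 f t| ≤ M := hM t htpos
  have := add_le_add (add_le_add (add_le_add b0 b1) b2) b3
  linarith
end

section
/- Let φ : [0,∞) → ℝ be a smooth function satisfying |φ(t)| ≤ C min{t, t⁻¹} for all t > 0 and some constant C > 0. Let σ be a function on a neighborhood that behaves like γ(x) + log|x - p|^{-2} near a point p (with γ smooth) and like θ(x) + log|x - q|^2 near a point q (θ smooth), and is smooth elsewhere. Then there exists a constant C' > 0 depending only on φ and σ such that for every measurable function u: φ(e^{σ+u}) |∇σ|² ≤ C'(1 + e^u + e^{-u}) pointwise (away from the singular points). -/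
open MeasureTheory Real Set ENNReal Filter

noncomputable section

/-- The plane `ℝ²`; doubly periodic functions on it represent functions on the
flat torus `M = ℝ²/ℤ²` (of total area `1`). -/
abbrev E2 : Type := EuclideanSpace ℝ (Fin 2)

/-- A fundamental domain `Q = [0,1]²` of the flat torus (so `∫_M = ∫_Q`). -/
def Q : Set E2 := {x | ∀ i, x i ∈ Set.Icc (0 : ℝ) 1}

/-- Doubly periodic function on `ℝ²`, i.e. a function on the torus `ℝ²/ℤ²`. -/
def Periodic2 (u : E2 → ℝ) : Prop :=
  ∀ (x : E2) (i : Fin 2), u (x + EuclideanSpace.single i 1) = u x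

/-- The Laplacian `Δu = Σᵢ ∂²u/∂xᵢ²`. -/
def lap (u : E2 → ℝ) (x : E2) : ℝ :=
  ∑ i : Fin 2,
    fderiv ℝ (fun y => fderiv ℝ u y (EuclideanSpace.single i 1)) x
      (EuclideanSpace.single i 1)

/-- Membership in `H¹(M)` (encoded: periodic with `u, ∇u ∈ L²(Q)`). -/
def InH1 (u : E2 → ℝ) : Prop :=
  Periodic2 u ∧ MemLp u 2 (volume.restrict Q) ∧
    MemLp (fun x => gradient u x) 2 (volume.restrict Q)

/-- Membership in `H²(M)` (encoded: additionally `Δu ∈ L²(Q)`). -/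
def InH2 (u : E2 → ℝ) : Prop :=
  InH1 u ∧ MemLp (fun x => lap u x) 2 (volume.restrict Q)

/-- A smooth doubly periodic test function. -/
def TestFun (φ : E2 → ℝ) : Prop := ContDiff ℝ (⊤ : ℕ∞) φ ∧ Periodic2 φ

/-- The data of the singular Green function `σ` on the torus, with `m` positive
vortex points `p₁,…,p_m` and `n` negative vortex points `q₁,…,q_n`:
`-Δσ = 4πΣδ_{p_j} - 4πΣδ_{q_k} - 4π(m-n)`, `∫σ = 0`; near `p_j` it behaves like
`γ_j(x) - 2log|x-p_j|` and near `q_k` like `θ_k(x) + 2log|x-q_k|`. -/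
structure VortexData (m n : ℕ) where
  p : Fin m → E2
  q : Fin n → E2
  σ : E2 → ℝ
  γ : Fin m → E2 → ℝ
  θ : Fin n → E2 → ℝ
  ρ : ℝ
  ρ_pos : 0 < ρ
  γ_smooth : ∀ j, ContDiff ℝ (⊤ : ℕ∞) (γ j)
  θ_smooth : ∀ k, ContDiff ℝ (⊤ : ℕ∞) (θ k)
  near_p : ∀ j, ∀ x ∈ Metric.ball (p j) ρ \ {p j},
      σ x = γ j x - 2 * Real.log ‖x - p j‖
  near_q : ∀ k, ∀ x ∈ Metric.ball (q k) ρ \ {q k},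
      σ x = θ k x + 2 * Real.log ‖x - q k‖
  smooth_away : ContDiffOn ℝ (⊤ : ℕ∞) σ (Q \ (Set.range p ∪ Set.range q))
  pde_away : ∀ x ∈ Q \ (Set.range p ∪ Set.range q),
      lap σ x = 4 * π * ((m : ℝ) - n)
  periodic : Periodic2 σ
  mean_zero : ∫ x in Q, σ x = 0

/-- Assumptions (f0)–(f2) of the paper on the nonlinearity `f`. -/
def FCond (f : ℝ → ℝ) (s : ℝ) : Prop :=
  ContDiffOn ℝ (⊤ : ℕ∞) f (Set.Ici 0) ∧ (∀ t : ℝ, 0 < t → 0 < deriv f t) ∧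
    f 0 < s ∧ s < sSup (f '' Set.Ioi 0) ∧ BddAbove (f '' Set.Ioi 0) ∧
    BddAbove ((fun t : ℝ => t ^ 4 * |iteratedDeriv 3 f t|) '' Set.Ioi 0)

/-- `G` is the Green function of `-ε²Δ + 1` on the torus, i.e.
`(-ε²Δ_x + 1) G(·,y) = δ_y` tested against smooth periodic functions. -/
def IsGreen (ε : ℝ) (G : E2 → E2 → ℝ) : Prop :=
  (∀ y, IntegrableOn (fun x => G x y) Q) ∧
    ∀ (y : E2) (φ : E2 → ℝ), TestFun φ →
      ∫ x in Q, G x y * (-(ε ^ 2) * lap φ x + φ x) = φ y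

/-- The Maxwell–Chern–Simons functional `I_ε` on `H²(M)`. -/
def Ifun {m n : ℕ} (V : VortexData m n) (f : ℝ → ℝ) (ε lam s A : ℝ)
    (u : E2 → ℝ) : ℝ :=
  ε ^ 2 / 2 * ∫ x in Q, (lap u x) ^ 2
    + 1 / 2 * ∫ x in Q, ‖gradient u x‖ ^ 2
    + ε * lam * ∫ x in Q, deriv f (Real.exp (V.σ x + u x)) * Real.exp (V.σ x + u x)
        * ‖gradient V.σ x + gradient u x‖ ^ 2
    + lam ^ 2 / 2 * ∫ x in Q, (f (Real.exp (V.σ x + u x)) - s) ^ 2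
    - A * ∫ x in Q, u x

/-- Weak solution of the `CP(1)` Maxwell–Chern–Simons system
`-Δu = ε⁻¹λ(v - f(e^{σ+u})) + A`,
`-Δv = ε⁻¹[λ f'(e^{σ+u})e^{σ+u}(s-v) - ε⁻¹(v - f(e^{σ+u}))]`. -/
def WeakSys {m n : ℕ} (V : VortexData m n) (f : ℝ → ℝ) (ε lam s A : ℝ)
    (u v : E2 → ℝ) : Prop :=
  ∀ φ : E2 → ℝ, TestFun φ →
    (∫ x in Q, inner (𝕜 := ℝ) (gradient u x) (gradient φ x) =
      ∫ x in Q, (ε⁻¹ * lam * (v x - f (Real.exp (V.σ x + u x))) + A) * φ x) ∧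
    (∫ x in Q, inner (𝕜 := ℝ) (gradient v x) (gradient φ x) =
      ∫ x in Q, ε⁻¹ * (lam * deriv f (Real.exp (V.σ x + u x)) * Real.exp (V.σ x + u x)
          * (s - v x)
        - ε⁻¹ * (v x - f (Real.exp (V.σ x + u x)))) * φ x)

/-- Weak solution of the fourth order equation
`ε²Δ²u - Δu = -ελ[f''(e^{σ+u})e^{σ+u} + f'(e^{σ+u})]e^{σ+u}|∇(σ+u)|²
  + 2ελΔf(e^{σ+u}) + λ²f'(e^{σ+u})e^{σ+u}(s - f(e^{σ+u})) + A`
(the term `2ελΔf(e^{σ+u})` is moved onto the test function). -/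
def WeakFourth {m n : ℕ} (V : VortexData m n) (f : ℝ → ℝ) (ε lam s A : ℝ)
    (u : E2 → ℝ) : Prop :=
  ∀ φ : E2 → ℝ, TestFun φ →
    ε ^ 2 * ∫ x in Q, lap u x * lap φ x
      + ∫ x in Q, inner (𝕜 := ℝ) (gradient u x) (gradient φ x) =
    ∫ x in Q,
        (-(ε * lam) * ((iteratedDeriv 2 f (Real.exp (V.σ x + u x)) * Real.exp (V.σ x + u x)
              + deriv f (Real.exp (V.σ x + u x))) * Real.exp (V.σ x + u x)
            * ‖gradient V.σ x + gradient u x‖ ^ 2)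
          + lam ^ 2 * deriv f (Real.exp (V.σ x + u x)) * Real.exp (V.σ x + u x)
            * (s - f (Real.exp (V.σ x + u x))) + A) * φ x
      + 2 * ε * lam * ∫ x in Q, f (Real.exp (V.σ x + u x)) * lap φ x

set_option maxHeartbeats 1000000 in
lemma Q_convex : Convex ℝ Q := by
  intro x hx y hy a b ha hb hab i
  have h : (a • x + b • y) i = a * x i + b * y i := by
    simp [PiLp.add_apply, PiLp.smul_apply, smul_eq_mul]
  show _ ∈ Set.Icc (0:ℝ) 1
  rw [h]
  exact (convex_Icc (0:ℝ) 1) (hx i) (hy i) ha hb hab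

lemma coord_le_norm (v : E2) (i : Fin 2) : |v i| ≤ ‖v‖ := by
  rw [EuclideanSpace.norm_eq, ← Real.sqrt_sq_eq_abs]
  apply Real.sqrt_le_sqrt
  have := Finset.single_le_sum (f := fun j => ‖v j‖ ^ 2) (fun j _ => by positivity)
    (Finset.mem_univ i)
  simpa [sq_abs] using this

lemma Q_compact : IsCompact Q := by
  have hclosed : IsClosed Q := by
    have : Q = ⋂ i, (fun x : E2 => x i) ⁻¹' Set.Icc (0:ℝ) 1 := by
      ext x; simp [Q]
    rw [this]
    exact isClosed_iInter fun i =>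
      isClosed_Icc.preimage (EuclideanSpace.proj i).continuous
  have hsub : Q ⊆ Metric.closedBall 0 2 := by
    intro x hx
    simp only [Metric.mem_closedBall, dist_zero_right]
    rw [EuclideanSpace.norm_eq]
    have : ∑ j, ‖x j‖ ^ 2 ≤ 2 := by
      have h1 : ∀ j, ‖x j‖ ^ 2 ≤ 1 := by
        intro j
        have := hx j
        rw [Real.norm_eq_abs, sq_abs]
        nlinarith [this.1, this.2]
      calc ∑ j, ‖x j‖ ^ 2 ≤ ∑ _j : Fin 2, (1:ℝ) := Finset.sum_le_sum fun j _ => h1 j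
        _ = 2 := by simp
    calc Real.sqrt (∑ j, ‖x j‖ ^ 2) ≤ Real.sqrt 2 := Real.sqrt_le_sqrt this
      _ ≤ 2 := by
          nlinarith [Real.sq_sqrt (by norm_num : (0:ℝ) ≤ 2), Real.sqrt_nonneg 2]
  exact (isCompact_closedBall 0 2).of_isClosed_subset hclosed hsub

lemma Q_interior_nonempty : (interior Q).Nonempty := by
  classical
  set c : E2 := (EuclideanSpace.equiv (Fin 2) ℝ).symm (fun _ => (1/2 : ℝ)) with hc
  have hci : ∀ i, c i = 1/2 := fun i => rfl
  refine ⟨c, ?_⟩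
  rw [mem_interior]
  refine ⟨Metric.ball c (1/2), ?_, Metric.isOpen_ball, Metric.mem_ball_self (by norm_num)⟩
  intro x hx i
  have h1 : |x i - c i| ≤ ‖x - c‖ := by
    have := coord_le_norm (x - c) i
    simpa [PiLp.sub_apply] using this
  have h2 : ‖x - c‖ < 1/2 := by rwa [Metric.mem_ball, dist_eq_norm] at hx
  rw [hci i] at h1
  constructor <;> [nlinarith [abs_le.1 (h1.trans h2.le)]; nlinarith [abs_le.1 (h1.trans h2.le)]]

set_option maxHeartbeats 1000000 in
lemma log_norm_deriv (p x : E2) (hx : x ≠ p) :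
    ∃ L : E2 →L[ℝ] ℝ, HasFDerivAt (fun y : E2 => Real.log ‖y - p‖) L x ∧
      ‖L‖ ≤ ‖x - p‖⁻¹ := by
  have hw : x - p ≠ 0 := sub_ne_zero.2 hx
  have hr : (0:ℝ) < ‖x - p‖ := norm_pos_iff.2 hw
  have h1 : HasFDerivAt (fun y : E2 => y - p) (ContinuousLinearMap.id ℝ E2) x :=
    (hasFDerivAt_id x).sub_const p
  have h2 : HasFDerivAt (fun y : E2 => ‖y - p‖ ^ 2)
      (2 • (innerSL ℝ (x - p)).comp (ContinuousLinearMap.id ℝ E2)) x := h1.norm_sq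
  have hnz : ‖x - p‖ ^ 2 ≠ 0 := by positivity
  have h3 := h2.log hnz
  have h4 := h3.const_mul (1/2 : ℝ)
  have heq : (fun y : E2 => Real.log ‖y - p‖)
      = fun y => (1/2 : ℝ) * Real.log (‖y - p‖ ^ 2) := by
    funext y; rw [Real.log_pow]; push_cast; ring
  refine ⟨_, by rw [heq]; exact h4, ?_⟩
  apply ContinuousLinearMap.opNorm_le_bound _ (by positivity)
  intro v
  have happ : ((1/2 : ℝ) • (‖x - p‖ ^ 2)⁻¹ •
      (2 • (innerSL ℝ (x - p)).comp (ContinuousLinearMap.id ℝ E2))) v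
      = (1/2) * ((‖x - p‖ ^ 2)⁻¹ * (2 * (inner ℝ (x - p) v : ℝ))) := by
    simp [ContinuousLinearMap.smul_apply, two_smul, inner_sub_left]
    ring
  rw [happ, Real.norm_eq_abs]
  have hiv : |(inner ℝ (x - p) v : ℝ)| ≤ ‖x - p‖ * ‖v‖ := abs_real_inner_le_norm _ _
  have hinv : (‖x - p‖ ^ 2)⁻¹ = ‖x - p‖⁻¹ * ‖x - p‖⁻¹ := by
    rw [sq, mul_inv]
  have h6 : ‖x - p‖⁻¹ * ‖x - p‖ = 1 := inv_mul_cancel₀ (ne_of_gt hr)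
  rw [abs_mul, abs_mul, abs_mul]
  rw [abs_of_nonneg (by norm_num : (0:ℝ) ≤ 1/2),
    abs_of_nonneg (by positivity : (0:ℝ) ≤ (‖x - p‖ ^ 2)⁻¹),
    abs_of_nonneg (by norm_num : (0:ℝ) ≤ (2:ℝ))]
  have hinvpos : (0:ℝ) ≤ ‖x - p‖⁻¹ := by positivity
  calc 1/2 * ((‖x - p‖ ^ 2)⁻¹ * (2 * |(inner ℝ (x - p) v : ℝ)|))
      = (‖x - p‖ ^ 2)⁻¹ * |(inner ℝ (x - p) v : ℝ)| := by ring
    _ ≤ (‖x - p‖ ^ 2)⁻¹ * (‖x - p‖ * ‖v‖) :=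
        mul_le_mul_of_nonneg_left hiv (by positivity)
    _ = ‖x - p‖⁻¹ * ‖v‖ := by
        rw [hinv, show ‖x - p‖⁻¹ * ‖x - p‖⁻¹ * (‖x - p‖ * ‖v‖)
          = ‖x - p‖⁻¹ * (‖x - p‖⁻¹ * ‖x - p‖) * ‖v‖ by ring, h6, mul_one]

set_option maxHeartbeats 1000000 in
lemma near_sing_bound (h σ : E2 → ℝ) (c : E2) (ρ B1 B2 : ℝ)
    (hρ : 0 < ρ) (hh : ContDiff ℝ (⊤ : ℕ∞) h) (hB2n : 0 ≤ B2)
    (hB1 : ∀ y ∈ Metric.closedBall c ρ, Real.exp (h y) ≤ B1)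
    (hB2 : ∀ y ∈ Metric.closedBall c ρ, ‖fderiv ℝ h y‖ ≤ B2)
    (hσc : ∀ y ∈ Metric.ball c ρ \ {c}, σ y = h y + 2 * Real.log ‖y - c‖)
    (x : E2) (hx : x ∈ Metric.ball c (ρ/2)) (hxc : x ≠ c) :
    Real.exp (σ x) * ‖fderiv ℝ σ x‖ ^ 2 ≤ B1 * (B2 * ρ + 2) ^ 2 := by
  have hxρ : x ∈ Metric.ball c ρ := Metric.ball_subset_ball (by linarith) hx
  have hxcb : x ∈ Metric.closedBall c ρ := Metric.ball_subset_closedBall hxρ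
  have hxm : x ∈ Metric.ball c ρ \ {c} := ⟨hxρ, by simpa using hxc⟩
  have hr : (0:ℝ) < ‖x - c‖ := norm_pos_iff.2 (sub_ne_zero.2 hxc)
  have hrρ : ‖x - c‖ ≤ ρ := by
    have := Metric.mem_ball.1 hxρ
    rw [dist_eq_norm] at this; linarith
  obtain ⟨L, hL, hLn⟩ := log_norm_deriv c x hxc
  have hF : HasFDerivAt (fun y => h y + 2 * Real.log ‖y - c‖)
      (fderiv ℝ h x + (2:ℝ) • L) x :=
    ((hh.differentiable (by simp) x).hasFDerivAt).add (hL.const_mul 2)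
  have hopen : IsOpen (Metric.ball c ρ \ {c}) :=
    Metric.isOpen_ball.sdiff isClosed_singleton
  have hEq : σ =ᶠ[nhds x] fun y => h y + 2 * Real.log ‖y - c‖ :=
    Filter.eventuallyEq_of_mem (hopen.mem_nhds hxm) hσc
  have hfd : fderiv ℝ σ x = fderiv ℝ h x + (2:ℝ) • L := by
    rw [hEq.fderiv_eq, hF.fderiv]
  have h2L : ‖(2:ℝ) • L‖ ≤ 2 * ‖x - c‖⁻¹ := by
    rw [two_smul]
    calc ‖L + L‖ ≤ ‖L‖ + ‖L‖ := norm_add_le _ _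
      _ ≤ 2 * ‖x - c‖⁻¹ := by linarith
  have hN : ‖fderiv ℝ σ x‖ ≤ B2 + 2 * ‖x - c‖⁻¹ := by
    rw [hfd]
    calc ‖fderiv ℝ h x + (2:ℝ) • L‖ ≤ ‖fderiv ℝ h x‖ + ‖(2:ℝ) • L‖ := norm_add_le _ _
      _ ≤ B2 + 2 * ‖x - c‖⁻¹ := add_le_add (hB2 x hxcb) h2L
  have hNn : (0:ℝ) ≤ B2 + 2 * ‖x - c‖⁻¹ := by positivity
  have hexp : Real.exp (σ x) = Real.exp (h x) * ‖x - c‖ ^ 2 := by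
    rw [hσc x hxm, Real.exp_add,
      show (2:ℝ) * Real.log ‖x - c‖ = Real.log (‖x - c‖ ^ 2) by
        rw [Real.log_pow]; push_cast; ring,
      Real.exp_log (by positivity)]
  have hkey : ‖x - c‖ ^ 2 * (B2 + 2 * ‖x - c‖⁻¹) ^ 2 = (B2 * ‖x - c‖ + 2) ^ 2 := by
    rw [← mul_pow]
    congr 1
    field_simp
  have hB1x : Real.exp (h x) ≤ B1 := hB1 x hxcb
  have hB1n : (0:ℝ) ≤ B1 := (Real.exp_pos _).le.trans hB1x
  calc Real.exp (σ x) * ‖fderiv ℝ σ x‖ ^ 2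
      ≤ Real.exp (σ x) * (B2 + 2 * ‖x - c‖⁻¹) ^ 2 := by
        exact mul_le_mul_of_nonneg_left
          (pow_le_pow_left₀ (norm_nonneg _) hN 2) (Real.exp_pos _).le
    _ = Real.exp (h x) * (B2 * ‖x - c‖ + 2) ^ 2 := by
        rw [hexp, mul_assoc, hkey]
    _ ≤ B1 * (B2 * ρ + 2) ^ 2 := by
        apply mul_le_mul hB1x
          (pow_le_pow_left₀ (by positivity) (by nlinarith) 2)
          (by positivity) hB1n

set_option maxHeartbeats 2000000 in
/-- pointwise bound `φ(e^{σ+u})|∇σ|² ≤ C'(1 + e^u + e^{-u})` away from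
the singular points, for `φ` smooth with `|φ(t)| ≤ C min{t, t⁻¹}` and `σ` with
logarithmic singularities `γ(x) - 2log|x-p|` near `p` and `θ(x) + 2log|x-q|` near `q`. -/
theorem stmt5 (φ : ℝ → ℝ) (C : ℝ) (hC : 0 < C)
    (hφs : ContDiffOn ℝ (⊤ : ℕ∞) φ (Set.Ici 0))
    (hφ : ∀ t : ℝ, 0 < t → |φ t| ≤ C * min t t⁻¹)
    (σ γ θ : E2 → ℝ) (p q : E2) (ρ : ℝ) (hρ : 0 < ρ) (hpq : p ≠ q)
    (hγ : ContDiff ℝ (⊤ : ℕ∞) γ) (hθ : ContDiff ℝ (⊤ : ℕ∞) θ)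
    (hσp : ∀ x ∈ Metric.ball p ρ \ {p}, σ x = γ x - 2 * Real.log ‖x - p‖)
    (hσq : ∀ x ∈ Metric.ball q ρ \ {q}, σ x = θ x + 2 * Real.log ‖x - q‖)
    (hσ : ContDiffOn ℝ (⊤ : ℕ∞) σ (Q \ {p, q}))
    (hper : Periodic2 σ) :
    ∃ C' : ℝ, 0 < C' ∧ ∀ u : E2 → ℝ, Measurable u →
      ∀ x ∈ Q, x ≠ p → x ≠ q →
        φ (Real.exp (σ x + u x)) * ‖gradient σ x‖ ^ 2 ≤
          C' * (1 + Real.exp (u x) + Real.exp (-u x)) := by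

  classical
  have hUDQ : UniqueDiffOn ℝ Q := uniqueDiffOn_convex Q_convex Q_interior_nonempty
  have hUD : ∀ x ∈ Q \ ({p, q} : Set E2), UniqueDiffWithinAt ℝ (Q \ {p, q}) x := by
    intro x hx
    have hopen : IsOpen (({p, q} : Set E2)ᶜ) :=
      ((Set.finite_singleton q).insert p).isClosed.isOpen_compl
    have hnh : nhdsWithin x (Q \ ({p, q} : Set E2)) = nhdsWithin x Q := by
      rw [Set.diff_eq, nhdsWithin_inter, hopen.nhdsWithin_eq hx.2]
      exact inf_eq_left.2 nhdsWithin_le_nhds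
    exact (uniqueDiffWithinAt_congr hnh).2 (hUDQ x hx.1)
  have hgcont : ContinuousOn (fderivWithin ℝ σ (Q \ {p, q})) (Q \ {p, q}) :=
    hσ.continuousOn_fderivWithin hUD (by simp)
  set K : Set E2 := Q \ (Metric.ball p (ρ/2) ∪ Metric.ball q (ρ/2)) with hKdef
  have hKcomp : IsCompact K :=
    Q_compact.diff (Metric.isOpen_ball.union Metric.isOpen_ball)
  have hKsub : K ⊆ Q \ ({p, q} : Set E2) := by
    intro x hx
    refine ⟨hx.1, ?_⟩
    intro hm
    rcases hm with rfl | hm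
    · exact hx.2 (Set.mem_union_left _ (Metric.mem_ball_self (by linarith)))
    · rw [Set.mem_singleton_iff] at hm; subst hm
      exact hx.2 (Set.mem_union_right _ (Metric.mem_ball_self (by linarith)))
  obtain ⟨C3, hC3⟩ := hKcomp.exists_bound_of_continuousOn (hgcont.mono hKsub)
  -- bounds near p (for -γ)
  obtain ⟨C1p, hC1p⟩ := (isCompact_closedBall p ρ).exists_bound_of_continuousOn
    ((Real.continuous_exp.comp hγ.neg.continuous).continuousOn)
  obtain ⟨C2p, hC2p⟩ := (isCompact_closedBall p ρ).exists_bound_of_continuousOn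
    ((hγ.neg.continuous_fderiv (by simp)).norm.continuousOn)
  obtain ⟨C1q, hC1q⟩ := (isCompact_closedBall q ρ).exists_bound_of_continuousOn
    ((Real.continuous_exp.comp hθ.continuous).continuousOn)
  obtain ⟨C2q, hC2q⟩ := (isCompact_closedBall q ρ).exists_bound_of_continuousOn
    ((hθ.continuous_fderiv (by simp)).norm.continuousOn)
  set B2p : ℝ := max C2p 0 with hB2pdef
  set B2q : ℝ := max C2q 0 with hB2qdef
  set B3 : ℝ := max C3 0 with hB3def
  have hB2pn : (0:ℝ) ≤ B2p := le_max_right _ _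
  have hB2qn : (0:ℝ) ≤ B2q := le_max_right _ _
  have hB3n : (0:ℝ) ≤ B3 := le_max_right _ _
  have hB1p : ∀ y ∈ Metric.closedBall p ρ, Real.exp ((fun z => -γ z) y) ≤ C1p :=
    fun y hy => (le_abs_self _).trans (by simpa [Real.norm_eq_abs] using hC1p y hy)
  have hB2p : ∀ y ∈ Metric.closedBall p ρ, ‖fderiv ℝ (fun z => -γ z) y‖ ≤ B2p :=
    fun y hy => le_trans ((le_abs_self _).trans
      (by simpa [Real.norm_eq_abs] using hC2p y hy)) (le_max_left _ _)
  have hB1q : ∀ y ∈ Metric.closedBall q ρ, Real.exp (θ y) ≤ C1q :=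
    fun y hy => (le_abs_self _).trans (by simpa [Real.norm_eq_abs] using hC1q y hy)
  have hB2q : ∀ y ∈ Metric.closedBall q ρ, ‖fderiv ℝ θ y‖ ≤ B2q :=
    fun y hy => le_trans ((le_abs_self _).trans
      (by simpa [Real.norm_eq_abs] using hC2q y hy)) (le_max_left _ _)
  have hC1pn : (0:ℝ) ≤ C1p :=
    (Real.exp_pos _).le.trans (hB1p p (Metric.mem_closedBall_self hρ.le))
  have hC1qn : (0:ℝ) ≤ C1q :=
    (Real.exp_pos _).le.trans (hB1q q (Metric.mem_closedBall_self hρ.le))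
  set Kp : ℝ := C1p * (B2p * ρ + 2) ^ 2 with hKpdef
  set Kq : ℝ := C1q * (B2q * ρ + 2) ^ 2 with hKqdef
  have hKpn : (0:ℝ) ≤ Kp := mul_nonneg hC1pn (sq_nonneg _)
  have hKqn : (0:ℝ) ≤ Kq := mul_nonneg hC1qn (sq_nonneg _)
  refine ⟨C * (Kp + Kq + B3 ^ 2 + 1), mul_pos hC (by nlinarith [sq_nonneg B3]), ?_⟩
  intro u hu x hxQ hxp hxq
  set C' : ℝ := C * (Kp + Kq + B3 ^ 2 + 1) with hC'def
  have hC' : (0:ℝ) < C' := mul_pos hC (by nlinarith [sq_nonneg B3])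
  set t : ℝ := Real.exp (σ x + u x) with htdef
  have ht : 0 < t := Real.exp_pos _
  have hφt : |φ t| ≤ C * min t t⁻¹ := hφ t ht
  by_cases hdiff : DifferentiableAt ℝ σ x
  · have hgrad : ‖gradient σ x‖ = ‖fderiv ℝ σ x‖ := by
      unfold gradient
      exact LinearIsometryEquiv.norm_map _ _
    have hstep1 : φ t * ‖gradient σ x‖ ^ 2 ≤ (C * min t t⁻¹) * ‖fderiv ℝ σ x‖ ^ 2 := by
      rw [hgrad]
      exact mul_le_mul_of_nonneg_right ((le_abs_self _).trans hφt) (by positivity)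
    by_cases hxp2 : x ∈ Metric.ball p (ρ/2)
    · -- near p
      have hτσ : ∀ y ∈ Metric.ball p ρ \ {p},
          (fun z => -σ z) y = (fun z => -γ z) y + 2 * Real.log ‖y - p‖ := by
        intro y hy
        simp only
        rw [hσp y hy]; ring
      have hKp' := near_sing_bound (fun z => -γ z) (fun z => -σ z) p ρ C1p B2p
        hρ hγ.neg hB2pn hB1p hB2p hτσ x hxp2 hxp
      have hKp2 : Real.exp (-σ x) * ‖fderiv ℝ σ x‖ ^ 2 ≤ Kp := by
        simpa [fderiv_neg] using hKp'
      calc φ t * ‖gradient σ x‖ ^ 2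
          ≤ (C * min t t⁻¹) * ‖fderiv ℝ σ x‖ ^ 2 := hstep1
        _ ≤ (C * t⁻¹) * ‖fderiv ℝ σ x‖ ^ 2 :=
            mul_le_mul_of_nonneg_right
              (mul_le_mul_of_nonneg_left (min_le_right _ _) hC.le) (by positivity)
        _ = C * (Real.exp (-σ x) * ‖fderiv ℝ σ x‖ ^ 2) * Real.exp (-u x) := by
            rw [show t⁻¹ = Real.exp (-σ x) * Real.exp (-u x) by
              rw [htdef, ← Real.exp_neg, neg_add, Real.exp_add]]
            ring
        _ ≤ C * Kp * Real.exp (-u x) :=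
            mul_le_mul_of_nonneg_right
              (mul_le_mul_of_nonneg_left hKp2 hC.le) (Real.exp_pos _).le
        _ ≤ C' * Real.exp (-u x) := by
            apply mul_le_mul_of_nonneg_right _ (Real.exp_pos _).le
            rw [hC'def]; nlinarith [sq_nonneg B3]
        _ ≤ C' * (1 + Real.exp (u x) + Real.exp (-u x)) := by
            apply mul_le_mul_of_nonneg_left _ hC'.le
            nlinarith [Real.exp_pos (u x)]
    · by_cases hxq2 : x ∈ Metric.ball q (ρ/2)
      · -- near q
        have hKq' := near_sing_bound θ σ q ρ C1q B2q
          hρ hθ hB2qn hB1q hB2q hσq x hxq2 hxq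
        calc φ t * ‖gradient σ x‖ ^ 2
            ≤ (C * min t t⁻¹) * ‖fderiv ℝ σ x‖ ^ 2 := hstep1
          _ ≤ (C * t) * ‖fderiv ℝ σ x‖ ^ 2 :=
              mul_le_mul_of_nonneg_right
                (mul_le_mul_of_nonneg_left (min_le_left _ _) hC.le) (by positivity)
          _ = C * (Real.exp (σ x) * ‖fderiv ℝ σ x‖ ^ 2) * Real.exp (u x) := by
              rw [htdef, Real.exp_add]; ring
          _ ≤ C * Kq * Real.exp (u x) :=
              mul_le_mul_of_nonneg_right
                (mul_le_mul_of_nonneg_left hKq' hC.le) (Real.exp_pos _).le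
          _ ≤ C' * Real.exp (u x) := by
              apply mul_le_mul_of_nonneg_right _ (Real.exp_pos _).le
              rw [hC'def]; nlinarith [sq_nonneg B3]
          _ ≤ C' * (1 + Real.exp (u x) + Real.exp (-u x)) := by
              apply mul_le_mul_of_nonneg_left _ hC'.le
              nlinarith [Real.exp_pos (-u x)]
      · -- compact region
        have hxK : x ∈ K := by
          refine ⟨hxQ, ?_⟩
          intro hm
          rcases hm with hm | hm
          · exact hxp2 hm
          · exact hxq2 hm
        have hx' : x ∈ Q \ ({p, q} : Set E2) := hKsub hxK
        have hfw : fderivWithin ℝ σ (Q \ ({p, q} : Set E2)) x = fderiv ℝ σ x :=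
          hdiff.fderivWithin (hUD x hx')
        have hNb : ‖fderiv ℝ σ x‖ ≤ B3 := by
          rw [← hfw]
          exact (hC3 x hxK).trans (le_max_left _ _)
        have hmin1 : min t t⁻¹ ≤ 1 := by
          rcases le_total t 1 with h | h
          · exact (min_le_left _ _).trans h
          · exact (min_le_right _ _).trans (inv_le_one_of_one_le₀ h)
        calc φ t * ‖gradient σ x‖ ^ 2
            ≤ (C * min t t⁻¹) * ‖fderiv ℝ σ x‖ ^ 2 := hstep1
          _ ≤ (C * 1) * B3 ^ 2 := by
              apply mul_le_mul (mul_le_mul_of_nonneg_left hmin1 hC.le)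
                (pow_le_pow_left₀ (norm_nonneg _) hNb 2) (by positivity)
                (by positivity)
          _ ≤ C' * (1 + Real.exp (u x) + Real.exp (-u x)) := by
              have h1 : C * 1 * B3 ^ 2 ≤ C' := by
                rw [hC'def]; nlinarith
              have h2 : (1:ℝ) ≤ 1 + Real.exp (u x) + Real.exp (-u x) := by
                nlinarith [Real.exp_pos (u x), Real.exp_pos (-u x)]
              calc C * 1 * B3 ^ 2 ≤ C' * 1 := by linarith
                _ ≤ C' * (1 + Real.exp (u x) + Real.exp (-u x)) :=
                    mul_le_mul_of_nonneg_left h2 hC'.le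
  · simp only [gradient_eq_zero_of_not_differentiableAt hdiff, norm_zero]
    have : (0:ℝ) < C' * (1 + Real.exp (u x) + Real.exp (-u x)) := by
      apply mul_pos hC'
      positivity
    nlinarith


end
end

section
/- Let f satisfy (f0)-(f2) and let (u_j) ⊂ H²(M) satisfy ‖u_j'‖_∞ ≤ C‖Δu_j‖_{L²} (with u_j' the zero-mean part) and c_j := ∫u_j → +∞ with ‖Δu_j‖_{L²} ≤ C c_j^{1/2}. Then for every ε > 0 there exists j̄ such that for all j ≥ j̄: |∫_M f'(e^{σ+u_j}) e^{σ+u_j} Δu_j · u_j' | ≤ (ε²/2) ‖Δu_j‖_{L²}². -/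
open MeasureTheory Real Set ENNReal Filter

noncomputable section

/-! ### Auxiliary lemmas -/

lemma Q_closed : IsClosed Q := by
  have h : Q = ⋂ i : Fin 2, (fun x : E2 => x i) ⁻¹' Set.Icc (0:ℝ) 1 := by
    ext x; simp [Q, Set.mem_iInter]
  rw [h]
  exact isClosed_iInter fun i =>
    IsClosed.preimage (EuclideanSpace.proj (𝕜 := ℝ) i).continuous isClosed_Icc

lemma Q_subset_ball : Q ⊆ Metric.closedBall (0:E2) 2 := by
  intro x hx
  simp only [Metric.mem_closedBall, dist_zero_right]
  have h2 : ‖x‖ ≤ Real.sqrt 2 := by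
    rw [EuclideanSpace.norm_eq]
    apply Real.sqrt_le_sqrt
    have hb : ∀ i : Fin 2, ‖x i‖^2 ≤ 1 := fun i => by
      have h := hx i
      rw [Real.norm_eq_abs, sq_abs]
      nlinarith [h.1, h.2]
    calc ∑ i, ‖x i‖^2 ≤ ∑ _i : Fin 2, (1:ℝ) := Finset.sum_le_sum (fun i _ => hb i)
      _ = 2 := by simp
  nlinarith [Real.sq_sqrt (show (0:ℝ) ≤ 2 by norm_num), Real.sqrt_nonneg 2]

lemma Q_vol_lt_top : volume Q < ⊤ :=
  lt_of_le_of_lt (measure_mono Q_subset_ball) measure_closedBall_lt_top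

instance : IsFiniteMeasure (volume.restrict Q) :=
  ⟨by rw [Measure.restrict_apply_univ]; exact Q_vol_lt_top⟩

lemma exists_global_bound (f : ℝ → ℝ) (s : ℝ) (hf : FCond f s)
    (hdecay : Tendsto (fun t : ℝ => deriv f t * t) atTop (nhds 0)) :
    ∃ M : ℝ, 0 ≤ M ∧ ∀ t : ℝ, 0 < t → |deriv f t * t| ≤ M := by
  have h1 : ∀ᶠ t in atTop, |deriv f t * t| ≤ 1 := by
    have h := hdecay.eventually (eventually_le_nhds (show (0:ℝ) < 1 by norm_num))
    filter_upwards [h, hdecay.eventually (eventually_ge_nhds (show (-1:ℝ) < 0 by norm_num))]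
      with t h1 h2
    rw [abs_le]; exact ⟨h2, h1⟩
  obtain ⟨T₁, hT₁⟩ := eventually_atTop.mp h1
  set T : ℝ := max T₁ 1 with hT
  have hTpos : 0 < T := lt_of_lt_of_le one_pos (le_max_right _ _)
  have hcont : ContinuousOn (derivWithin f (Set.Ici 0)) (Set.Ici 0) :=
    hf.1.continuousOn_derivWithin (uniqueDiffOn_Ici 0) (by simp)
  obtain ⟨B, hB⟩ := (isCompact_Icc : IsCompact (Set.Icc (0:ℝ) T)).exists_bound_of_continuousOn
    (hcont.mono (fun t ht => ht.1))
  have hB0 : 0 ≤ B := le_trans (norm_nonneg _) (hB 0 ⟨le_refl 0, hTpos.le⟩)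
  refine ⟨max (B * T) 1, le_trans zero_le_one (le_max_right _ _), fun t ht => ?_⟩
  rcases le_or_gt t T with hle | hgt
  · have heq : deriv f t = derivWithin f (Set.Ici 0) t := by
      rw [derivWithin_of_mem_nhds (Ici_mem_nhds ht)]
    have hd : |deriv f t| ≤ B := by
      rw [heq, ← Real.norm_eq_abs]; exact hB t ⟨ht.le, hle⟩
    calc |deriv f t * t| = |deriv f t| * |t| := abs_mul _ _
      _ ≤ B * T := mul_le_mul hd (by rw [abs_of_pos ht]; exact hle) (abs_nonneg _) hB0
      _ ≤ max (B * T) 1 := le_max_left _ _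
  · exact le_trans (hT₁ t (le_trans (le_max_left _ _) hgt.le)) (le_max_right _ _)

lemma holder_ind {α : Type*} [MeasurableSpace α] (ν : Measure α) [IsFiniteMeasure ν]
    {g : α → ℝ} (hg : MemLp g 2 ν) {B : Set α} (hB : MeasurableSet B) :
    ∫ x, B.indicator (fun y => |g y|) x ∂ν ≤
      Real.sqrt (ν B).toReal * Real.sqrt (∫ x, (g x) ^ 2 ∂ν) := by
  have hconj : Real.HolderConjugate 2 2 := Real.HolderConjugate.two_two
  have h2 : ENNReal.ofReal (2:ℝ) = 2 := by norm_num
  have hf1 : MemLp (B.indicator (fun _ => (1:ℝ))) (ENNReal.ofReal 2) ν := by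
    rw [h2]; exact (memLp_const 1).indicator hB
  have hg1 : MemLp (fun y => |g y|) (ENNReal.ofReal 2) ν := by
    rw [h2]
    have := hg.norm
    simpa [Real.norm_eq_abs] using this
  have key := integral_mul_le_Lp_mul_Lq_of_nonneg hconj
    (f := B.indicator (fun _ => (1:ℝ))) (g := fun y => |g y|)
    (Filter.Eventually.of_forall (fun x => Set.indicator_nonneg (fun _ _ => zero_le_one) x))
    (Filter.Eventually.of_forall (fun x => abs_nonneg _)) hf1 hg1
  have hl : ∀ x, B.indicator (fun y => |g y|) x =
      B.indicator (fun _ => (1:ℝ)) x * |g x| := by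
    intro x; by_cases hx : x ∈ B <;> simp [hx]
  rw [show (∫ x, B.indicator (fun y => |g y|) x ∂ν) =
      ∫ x, B.indicator (fun _ => (1:ℝ)) x * |g x| ∂ν from integral_congr_ae
      (Filter.Eventually.of_forall hl)]
  refine le_trans key (le_of_eq ?_)
  have e1 : (∫ x, B.indicator (fun _ => (1:ℝ)) x ^ (2:ℝ) ∂ν) = (ν B).toReal := by
    rw [show (fun x => B.indicator (fun _ => (1:ℝ)) x ^ (2:ℝ)) =
        B.indicator (fun _ => (1:ℝ)) from funext fun x => by
      by_cases hx : x ∈ B <;> simp [hx]]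
    rw [integral_indicator_const (1:ℝ) hB]; simp [Measure.real]
  have e2 : (∫ x, |g x| ^ (2:ℝ) ∂ν) = ∫ x, (g x) ^ 2 ∂ν := by
    congr 1; funext x
    rw [show ((2:ℝ)) = ((2:ℕ):ℝ) by norm_num, Real.rpow_natCast, sq_abs]
  rw [e1, e2, Real.sqrt_eq_rpow, Real.sqrt_eq_rpow]

lemma sigma_lower {m n : ℕ} (V : VortexData m n) :
    ∃ L : ℝ, ∀ x ∈ Q, x ∉ Set.range V.p → x ∉ Set.range V.q →
      (-L ≤ V.σ x ∨
        ∃ k, dist x (V.q k) < V.ρ ∧ -L + 2 * Real.log (dist x (V.q k)) ≤ V.σ x) := by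
  set ρ₀ : ℝ := min V.ρ 1 with hρ₀
  have hρ₀pos : 0 < ρ₀ := lt_min V.ρ_pos one_pos
  have hρ₀le1 : ρ₀ ≤ 1 := min_le_right _ _
  have hρ₀leρ : ρ₀ ≤ V.ρ := min_le_left _ _
  set half : ℝ := ρ₀ / 2 with hhalf
  have hhalfpos : 0 < half := by positivity
  have hhalfρ : half < V.ρ := lt_of_lt_of_le (by linarith) hρ₀leρ
  have hhalf1 : half < 1 := lt_of_lt_of_le (by linarith) hρ₀le1
  have hbγ : ∀ j, ∃ bj : ℝ, ∀ y ∈ Metric.closedBall (V.p j) 1, ‖V.γ j y‖ ≤ bj := fun j =>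
    (isCompact_closedBall _ _).exists_bound_of_continuousOn
      (V.γ_smooth j).continuous.continuousOn
  choose b hb using hbγ
  have hbθ : ∀ k, ∃ ck : ℝ, ∀ y ∈ Metric.closedBall (V.q k) 1, ‖V.θ k y‖ ≤ ck := fun k =>
    (isCompact_closedBall _ _).exists_bound_of_continuousOn
      (V.θ_smooth k).continuous.continuousOn
  choose cc hcc using hbθ
  set K : Set E2 := Q ∩ ((⋂ j, {x | half ≤ dist x (V.p j)}) ∩ ⋂ k, {x | half ≤ dist x (V.q k)})
    with hK
  have hKclosed : IsClosed K := by
    refine Q_closed.inter (IsClosed.inter ?_ ?_) <;>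
    · exact isClosed_iInter fun i =>
        isClosed_le continuous_const (continuous_id.dist continuous_const)
  have hKsub : K ⊆ Q \ (Set.range V.p ∪ Set.range V.q) := by
    rintro x ⟨hxQ, hxp, hxq⟩
    refine ⟨hxQ, ?_⟩
    rintro (⟨j, rfl⟩ | ⟨k, rfl⟩)
    · have := Set.mem_iInter.mp hxp j
      simp only [Set.mem_setOf_eq, dist_self] at this
      linarith
    · have := Set.mem_iInter.mp hxq k
      simp only [Set.mem_setOf_eq, dist_self] at this
      linarith
  obtain ⟨LK, hLK⟩ := (IsCompact.of_isClosed_subset Q_compact hKclosed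
    (Set.inter_subset_left)).exists_bound_of_continuousOn
    (V.smooth_away.continuousOn.mono hKsub)
  set L : ℝ := (∑ j, |b j|) + (∑ k, |cc k|) + |LK| with hL
  have hsb : ∀ j, |b j| ≤ L := fun j => by
    have h1 : |b j| ≤ ∑ j', |b j'| :=
      Finset.single_le_sum (fun i _ => abs_nonneg (b i)) (Finset.mem_univ j)
    have h2 : (0:ℝ) ≤ ∑ k, |cc k| := Finset.sum_nonneg fun i _ => abs_nonneg _
    have h3 : (0:ℝ) ≤ |LK| := abs_nonneg _
    linarith
  have hsc : ∀ k, |cc k| ≤ L := fun k => by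
    have h1 : |cc k| ≤ ∑ k', |cc k'| :=
      Finset.single_le_sum (fun i _ => abs_nonneg (cc i)) (Finset.mem_univ k)
    have h2 : (0:ℝ) ≤ ∑ j, |b j| := Finset.sum_nonneg fun i _ => abs_nonneg _
    have h3 : (0:ℝ) ≤ |LK| := abs_nonneg _
    linarith
  have hsLK : |LK| ≤ L := by
    have h1 : (0:ℝ) ≤ ∑ j, |b j| := Finset.sum_nonneg fun i _ => abs_nonneg _
    have h2 : (0:ℝ) ≤ ∑ k, |cc k| := Finset.sum_nonneg fun i _ => abs_nonneg _
    linarith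
  refine ⟨L, fun x hxQ hxp hxq => ?_⟩
  by_cases hp : ∃ j, dist x (V.p j) < half
  · obtain ⟨j, hj⟩ := hp
    left
    have hxne : x ≠ V.p j := fun h => hxp ⟨j, h.symm⟩
    have hdistpos : 0 < dist x (V.p j) := dist_pos.mpr hxne
    have hxball : x ∈ Metric.ball (V.p j) V.ρ \ {V.p j} :=
      ⟨Metric.mem_ball.mpr (hj.trans hhalfρ), hxne⟩
    have hσ := V.near_p j x hxball
    have hnorm : ‖x - V.p j‖ = dist x (V.p j) := (dist_eq_norm _ _).symm
    have hlogneg : Real.log (dist x (V.p j)) < 0 :=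
      Real.log_neg hdistpos (hj.trans hhalf1)
    have hγ : -(b j) ≤ V.γ j x := by
      have := hb j x (Metric.mem_closedBall.mpr (le_of_lt (hj.trans hhalf1)))
      rw [Real.norm_eq_abs, abs_le] at this
      exact this.1
    have hbL : b j ≤ L := le_trans (le_abs_self _) (hsb j)
    rw [hσ, hnorm]
    linarith
  by_cases hq : ∃ k, dist x (V.q k) < half
  · obtain ⟨k, hk⟩ := hq
    right
    refine ⟨k, hk.trans hhalfρ, ?_⟩
    have hxne : x ≠ V.q k := fun h => hxq ⟨k, h.symm⟩
    have hxball : x ∈ Metric.ball (V.q k) V.ρ \ {V.q k} :=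
      ⟨Metric.mem_ball.mpr (hk.trans hhalfρ), hxne⟩
    have hσ := V.near_q k x hxball
    have hnorm : ‖x - V.q k‖ = dist x (V.q k) := (dist_eq_norm _ _).symm
    have hθ : -(cc k) ≤ V.θ k x := by
      have := hcc k x (Metric.mem_closedBall.mpr (le_of_lt (hk.trans hhalf1)))
      rw [Real.norm_eq_abs, abs_le] at this
      exact this.1
    have hcL : cc k ≤ L := le_trans (le_abs_self _) (hsc k)
    rw [hσ, hnorm]
    linarith
  · left
    push_neg at hp hq
    have hxK : x ∈ K := ⟨hxQ, Set.mem_iInter.mpr fun j => hp j, Set.mem_iInter.mpr fun k => hq k⟩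
    have h := hLK x hxK
    rw [Real.norm_eq_abs, abs_le] at h
    have hLKL : LK ≤ L := le_trans (le_abs_self _) hsLK
    linarith [h.1]

lemma vol_union_balls_small {n : ℕ} (q : Fin n → E2) {r : ℕ → ℝ}
    (hr : Tendsto r atTop (nhds 0)) (hrpos : ∀ j, 0 ≤ r j) {δ : ℝ} (hδ : 0 < δ) :
    ∀ᶠ j in atTop, volume (⋃ k, Metric.closedBall (q k) (r j)) ≤ ENNReal.ofReal δ := by
  have hk : ∀ k : Fin n, Tendsto (fun j => volume (Metric.closedBall (q k) (r j)))
      atTop (nhds 0) := by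
    intro k
    have hth : Tendsto (fun ρ : ℝ => volume (Metric.cthickening ρ ({q k} : Set E2)))
        (nhds 0) (nhds (volume (closure ({q k} : Set E2)))) := by
      apply tendsto_measure_cthickening
      refine ⟨1, one_pos, ?_⟩
      rw [Metric.cthickening_singleton _ zero_le_one]
      exact measure_closedBall_lt_top.ne
    have h0 : volume (closure ({q k} : Set E2)) = 0 := by
      rw [closure_singleton]; exact measure_singleton _
    rw [h0] at hth
    have hcomp := hth.comp hr
    apply hcomp.congr
    intro j
    simp only [Function.comp_apply, Metric.cthickening_singleton _ (hrpos j)]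
  have hsum : Tendsto (fun j => ∑ k : Fin n, volume (Metric.closedBall (q k) (r j)))
      atTop (nhds 0) := by
    have := tendsto_finset_sum (Finset.univ : Finset (Fin n)) (fun k _ => hk k)
    simpa using this
  have hlt : ∀ᶠ j in atTop,
      (∑ k : Fin n, volume (Metric.closedBall (q k) (r j))) < ENNReal.ofReal δ :=
    (tendsto_order.1 hsum).2 _ (ENNReal.ofReal_pos.mpr hδ)
  filter_upwards [hlt] with j hj
  exact le_trans (measure_iUnion_fintype_le _ _) hj.le


lemma arith_aux {C ε x : ℝ} (hC : 0 < C) (hx : 0 ≤ x) :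
    C * (ε^2/(4*C*(x+1))) * x ≤ ε^2/4 := by
  have hx1 : (0:ℝ) < x + 1 := by linarith
  have h1 : C * (ε^2/(4*C*(x+1))) * x = (ε^2 * x) / (4*(x+1)) := by
    field_simp
  rw [h1, div_le_div_iff₀ (by positivity) (by norm_num)]
  nlinarith [sq_nonneg ε]

/-- if `‖u_j'‖_∞ ≤ C‖Δu_j‖_{L²}` and `c_j = ∫u_j → +∞` with
`‖Δu_j‖_{L²} ≤ C c_j^{1/2}`, then for every `ε > 0` eventually
`|∫ f'(e^{σ+u_j}) e^{σ+u_j} Δu_j u_j'| ≤ (ε²/2)‖Δu_j‖_{L²}²`. -/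
theorem stmt19 {m n : ℕ} (V : VortexData m n) (f : ℝ → ℝ) (s : ℝ)
    (hf : FCond f s)
    (hdecay : Tendsto (fun t : ℝ => deriv f t * t) atTop (nhds 0))
    (u : ℕ → E2 → ℝ) (hu : ∀ j, InH2 (u j)) (huC : ∀ j, ContDiff ℝ 2 (u j))
    (c D : ℕ → ℝ)
    (hc : ∀ j, c j = ∫ x in Q, u j x)
    (hD : ∀ j, D j = (∫ x in Q, (lap (u j) x) ^ 2) ^ ((1 : ℝ) / 2))
    (C : ℝ) (hC : 0 < C)
    (hsup : ∀ j, ∀ x ∈ Q, |u j x - c j| ≤ C * D j)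
    (hctop : Tendsto c atTop atTop)
    (hDc : ∀ j, D j ≤ C * Real.sqrt (c j)) :
    ∀ ε : ℝ, 0 < ε → ∃ J : ℕ, ∀ j : ℕ, J ≤ j →
      |∫ x in Q, deriv f (Real.exp (V.σ x + u j x)) * Real.exp (V.σ x + u j x)
          * lap (u j) x * (u j x - c j)| ≤ ε ^ 2 / 2 * (D j) ^ 2 := by
  classical
  obtain ⟨M, hM0, hM⟩ := exists_global_bound f s hf hdecay
  obtain ⟨L, hL⟩ := sigma_lower V
  have hNnull : (volume (Set.range V.p ∪ Set.range V.q) : ℝ≥0∞) = 0 :=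
    measure_union_null ((Set.finite_range V.p).measure_zero _)
      ((Set.finite_range V.q).measure_zero _)
  have hV₀ : 0 ≤ Real.sqrt ((volume Q).toReal) := Real.sqrt_nonneg _
  intro ε hε
  set μ0 : ℝ := ε^2/(4*C*(Real.sqrt ((volume Q).toReal)+1)) with hμ0def
  have hμ0 : 0 < μ0 := by rw [hμ0def]; positivity
  set δ₁ : ℝ := ε^2/(4*C*(M+1)) with hδ₁def
  have hδ₁ : 0 < δ₁ := by rw [hδ₁def]; positivity
  -- threshold from the decay assumption
  have hTev : ∀ᶠ t in atTop, |deriv f t * t| ≤ μ0 := by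
    have h := hdecay.eventually (eventually_le_nhds hμ0)
    filter_upwards [h, hdecay.eventually (eventually_ge_nhds (neg_lt_zero.mpr hμ0))]
      with t h1 h2
    rw [abs_le]; exact ⟨h2, h1⟩
  obtain ⟨T₂, hT₂⟩ := eventually_atTop.mp hTev
  obtain ⟨T₀, hT₀pos, hT₀⟩ : ∃ T₀ : ℝ, 0 < T₀ ∧ ∀ t, T₀ ≤ t → |deriv f t * t| ≤ μ0 :=
    ⟨max T₂ 1, lt_of_lt_of_le one_pos (le_max_right _ _),
      fun t ht => hT₂ t (le_trans (le_max_left _ _) ht)⟩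
  -- facts about D
  have hD0 : ∀ j, 0 ≤ D j := fun j => by
    rw [hD j]
    exact Real.rpow_nonneg (integral_nonneg fun x => sq_nonneg _) _
  have hDsqrt : ∀ j, D j = Real.sqrt (∫ x in Q, (lap (u j) x)^2) := fun j => by
    rw [hD j, Real.sqrt_eq_rpow]
  -- `c j - C * D j → ∞`
  have ha : Tendsto (fun j => c j - C * D j) atTop atTop := by
    apply tendsto_atTop_mono' atTop ?_ (Tendsto.atTop_div_const two_pos hctop)
    filter_upwards [hctop.eventually_ge_atTop (max (4*C^4) 0)] with j hj
    have hc0 : (0:ℝ) ≤ c j := le_trans (le_max_right _ _) hj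
    have hc4 : 4*C^4 ≤ c j := le_trans (le_max_left _ _) hj
    have hs := Real.sq_sqrt hc0
    have hsn := Real.sqrt_nonneg (c j)
    have h1 : C * D j ≤ C^2 * Real.sqrt (c j) := by
      have := mul_le_mul_of_nonneg_left (hDc j) hC.le
      nlinarith
    have h2 : C^2 * Real.sqrt (c j) ≤ c j / 2 := by
      nlinarith [sq_nonneg (Real.sqrt (c j) - 2*C^2)]
    show c j / 2 ≤ c j - C * D j
    linarith
  set r : ℕ → ℝ := fun j => Real.exp ((Real.log T₀ + L - (c j - C * D j))/2) with hrdef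
  have hrpos : ∀ j, 0 < r j := fun j => by rw [hrdef]; exact Real.exp_pos _
  have hrt : Tendsto r atTop (nhds 0) := by
    rw [hrdef]
    apply Real.tendsto_exp_atBot.comp
    have h1 : Tendsto (fun j => -(c j - C * D j)) atTop atBot := tendsto_neg_atBot_iff.mpr ha
    have h2 : Tendsto (fun j => Real.log T₀ + L + -(c j - C * D j)) atTop atBot :=
      tendsto_atBot_add_const_left _ _ h1
    have h3 := Tendsto.atBot_div_const two_pos h2
    apply h3.congr
    intro j; ring
  have hEv1 : ∀ᶠ j in atTop, Real.log T₀ + L ≤ c j - C * D j := ha.eventually_ge_atTop _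
  have hEv2 : ∀ᶠ j in atTop,
      volume (⋃ k, Metric.closedBall (V.q k) (r j)) ≤ ENNReal.ofReal (δ₁^2) :=
    vol_union_balls_small V.q hrt (fun j => (hrpos j).le) (by positivity)
  obtain ⟨J, hJ⟩ := eventually_atTop.mp (hEv1.and hEv2)
  refine ⟨J, fun j hj => ?_⟩
  obtain ⟨hE1, hE2⟩ := hJ j hj
  -- the main estimate for a fixed large `j`
  set B : Set E2 := ⋃ k, Metric.closedBall (V.q k) (r j) with hBdef
  have hBmeas : MeasurableSet B := by
    rw [hBdef]; exact MeasurableSet.iUnion fun k => measurableSet_closedBall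
  have hg2 : MemLp (fun x => lap (u j) x) 2 (volume.restrict Q) := (hu j).2
  have hgint : Integrable (fun x => lap (u j) x) (volume.restrict Q) :=
    hg2.integrable one_le_two
  set c1 : ℝ := C * D j * μ0 with hc1def
  set c2 : ℝ := C * D j * M with hc2def
  have hc10 : 0 ≤ c1 := by
    rw [hc1def]; exact mul_nonneg (mul_nonneg hC.le (hD0 j)) hμ0.le
  have hc20 : 0 ≤ c2 := by
    rw [hc2def]; exact mul_nonneg (mul_nonneg hC.le (hD0 j)) hM0
  have hφi1 : Integrable (fun x => c1 * |lap (u j) x|) (volume.restrict Q) :=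
    hgint.abs.const_mul c1
  have hφi2 : Integrable (fun x => c2 * B.indicator (fun y => |lap (u j) y|) x)
      (volume.restrict Q) := (hgint.abs.indicator hBmeas).const_mul c2
  -- pointwise a.e. bound
  have hae : ∀ᵐ x ∂(volume.restrict Q),
      ‖deriv f (Real.exp (V.σ x + u j x)) * Real.exp (V.σ x + u j x)
        * lap (u j) x * (u j x - c j)‖ ≤
      c1 * |lap (u j) x| + c2 * B.indicator (fun y => |lap (u j) y|) x := by
    filter_upwards [ae_restrict_mem Q_closed.measurableSet,
      ae_restrict_of_ae (measure_eq_zero_iff_ae_notMem.mp hNnull)] with x hxQ hxN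
    have ht : (0:ℝ) < Real.exp (V.σ x + u j x) := Real.exp_pos _
    have hw : |u j x - c j| ≤ C * D j := hsup j x hxQ
    have hxp : x ∉ Set.range V.p := fun h => hxN (Or.inl h)
    have hxq : x ∉ Set.range V.q := fun h => hxN (Or.inr h)
    have habs : ‖deriv f (Real.exp (V.σ x + u j x)) * Real.exp (V.σ x + u j x)
          * lap (u j) x * (u j x - c j)‖ =
        |deriv f (Real.exp (V.σ x + u j x)) * Real.exp (V.σ x + u j x)|
          * |lap (u j) x| * |u j x - c j| := by
      rw [Real.norm_eq_abs, abs_mul, abs_mul]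
    by_cases hxB : x ∈ B
    · have hFb : |deriv f (Real.exp (V.σ x + u j x)) * Real.exp (V.σ x + u j x)| ≤ M :=
        hM _ ht
      have hind : B.indicator (fun y => |lap (u j) y|) x = |lap (u j) x| :=
        Set.indicator_of_mem hxB _
      rw [habs, hind]
      have h1 : |deriv f (Real.exp (V.σ x + u j x)) * Real.exp (V.σ x + u j x)|
            * |lap (u j) x| * |u j x - c j| ≤ M * |lap (u j) x| * (C * D j) :=
        mul_le_mul (mul_le_mul_of_nonneg_right hFb (abs_nonneg _)) hw (abs_nonneg _)
          (mul_nonneg hM0 (abs_nonneg _))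
      have h2 : 0 ≤ c1 * |lap (u j) x| := mul_nonneg hc10 (abs_nonneg _)
      have h3 : M * |lap (u j) x| * (C * D j) = c2 * |lap (u j) x| := by
        rw [hc2def]; ring
      linarith
    · have hu_lb : c j - C * D j ≤ u j x := by
        have := abs_le.mp hw; linarith [this.1]
      have hst : Real.log T₀ ≤ V.σ x + u j x := by
        rcases hL x hxQ hxp hxq with hσ | ⟨k, _hk1, hk2⟩
        · linarith
        · have hxk : x ∉ Metric.closedBall (V.q k) (r j) := fun h => by
            exact hxB (by rw [hBdef]; exact Set.mem_iUnion.mpr ⟨k, h⟩)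
          have hdk : r j < dist x (V.q k) := by
            by_contra hcon; push_neg at hcon
            exact hxk (Metric.mem_closedBall.mpr hcon)
          have hlog := Real.log_lt_log (hrpos j) hdk
          rw [hrdef] at hlog
          simp only [Real.log_exp] at hlog
          linarith
      have htT : T₀ ≤ Real.exp (V.σ x + u j x) := by
        have h := Real.exp_le_exp.mpr hst
        rwa [Real.exp_log hT₀pos] at h
      have hFb : |deriv f (Real.exp (V.σ x + u j x)) * Real.exp (V.σ x + u j x)| ≤ μ0 :=
        hT₀ _ htT
      have hind : B.indicator (fun y => |lap (u j) y|) x = 0 :=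
        Set.indicator_of_notMem hxB _
      rw [habs, hind]
      have h1 : |deriv f (Real.exp (V.σ x + u j x)) * Real.exp (V.σ x + u j x)|
            * |lap (u j) x| * |u j x - c j| ≤ μ0 * |lap (u j) x| * (C * D j) :=
        mul_le_mul (mul_le_mul_of_nonneg_right hFb (abs_nonneg _)) hw (abs_nonneg _)
          (mul_nonneg hμ0.le (abs_nonneg _))
      have h3 : μ0 * |lap (u j) x| * (C * D j) = c1 * |lap (u j) x| := by
        rw [hc1def]; ring
      linarith
  -- integrate the bound
  have step1 : |∫ x in Q, deriv f (Real.exp (V.σ x + u j x)) * Real.exp (V.σ x + u j x)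
        * lap (u j) x * (u j x - c j)| ≤
      ∫ x in Q, (c1 * |lap (u j) x| + c2 * B.indicator (fun y => |lap (u j) y|) x) := by
    rw [← Real.norm_eq_abs]
    refine le_trans (norm_integral_le_integral_norm _) ?_
    exact integral_mono_of_nonneg (Filter.Eventually.of_forall fun x => norm_nonneg _)
      (hφi1.add hφi2) hae
  have hsplit : (∫ x in Q, (c1 * |lap (u j) x|
        + c2 * B.indicator (fun y => |lap (u j) y|) x)) =
      c1 * (∫ x in Q, |lap (u j) x|)
        + c2 * (∫ x in Q, B.indicator (fun y => |lap (u j) y|) x) := by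
    rw [integral_add hφi1 hφi2, integral_const_mul, integral_const_mul]
  rw [hsplit] at step1
  -- Hölder bounds
  have hDj : Real.sqrt (∫ x in Q, (lap (u j) x)^2) = D j := (hDsqrt j).symm
  have hb1 : (∫ x in Q, |lap (u j) x|) ≤ Real.sqrt ((volume Q).toReal) * D j := by
    have h := holder_ind (volume.restrict Q) hg2 MeasurableSet.univ
    simp only [Set.indicator_univ] at h
    rw [Measure.restrict_apply_univ, hDj] at h
    exact h
  have hb2 : (∫ x in Q, B.indicator (fun y => |lap (u j) y|) x) ≤ δ₁ * D j := by
    have h := holder_ind (volume.restrict Q) hg2 hBmeas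
    have hν : (volume.restrict Q) B ≤ ENNReal.ofReal (δ₁^2) := by
      rw [Measure.restrict_apply hBmeas]
      refine le_trans (measure_mono Set.inter_subset_left) ?_
      rw [hBdef]; exact hE2
    have hν' : ((volume.restrict Q) B).toReal ≤ δ₁^2 := by
      have h2 := ENNReal.toReal_mono ENNReal.ofReal_ne_top hν
      rwa [ENNReal.toReal_ofReal (sq_nonneg δ₁)] at h2
    have hsq : Real.sqrt ((volume.restrict Q) B).toReal ≤ δ₁ :=
      le_trans (Real.sqrt_le_sqrt hν') (le_of_eq (Real.sqrt_sq hδ₁.le))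
    rw [hDj] at h
    exact le_trans h (mul_le_mul_of_nonneg_right hsq (hD0 j))
  -- final arithmetic
  have hm1 : c1 * (∫ x in Q, |lap (u j) x|) ≤ c1 * (Real.sqrt ((volume Q).toReal) * D j) :=
    mul_le_mul_of_nonneg_left hb1 hc10
  have hm2 : c2 * (∫ x in Q, B.indicator (fun y => |lap (u j) y|) x) ≤ c2 * (δ₁ * D j) :=
    mul_le_mul_of_nonneg_left hb2 hc20
  have hA : C * μ0 * Real.sqrt ((volume Q).toReal) ≤ ε^2/4 := by
    have h0 : C * μ0 * Real.sqrt ((volume Q).toReal) =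
        C * (ε^2/(4*C*(Real.sqrt ((volume Q).toReal)+1))) * Real.sqrt ((volume Q).toReal) := by
      rw [hμ0def]
    rw [h0]
    exact arith_aux hC hV₀
  have hB2 : C * M * δ₁ ≤ ε^2/4 := by
    have h0 : C * M * δ₁ = C * (ε^2/(4*C*(M+1))) * M := by rw [hδ₁def]; ring
    rw [h0]
    exact arith_aux hC hM0
  have e1 : c1 * (Real.sqrt ((volume Q).toReal) * D j) =
      (C * μ0 * Real.sqrt ((volume Q).toReal)) * (D j)^2 := by rw [hc1def]; ring
  have e2 : c2 * (δ₁ * D j) = (C * M * δ₁) * (D j)^2 := by rw [hc2def]; ring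
  have hD2 : 0 ≤ (D j)^2 := sq_nonneg _
  nlinarith [step1, hm1, hm2, hA, hB2, e1, e2]

end
end
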